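/- Let δ ∈ S* ∪ {λ} and let p = p*_{η,δ,S} ∈ Q_δ. Then the set S_p of pruning levels of p (limit ordinals δ₁ ∈ (lg(η), δ) at which some node of T_{δ₁} has all proper initial segments in p but is not in p) is a subset of S; in particular S_p is tenuous. -/

import Mathlib

open Set Ordinal

namespace RRF

/-- `C` is a closed unbounded (club) subset of the ordinal `δ`. -/
def ClubIn (C : Set Ordinal) (δ : Ordinal) : Prop :=
  (∀ α < δ, ∃ β ∈ C, α < β ∧ β < δ) ∧
  (∀ α, 0 < α → α < δ → (∀ β < α, ∃ γ ∈ C, β < γ ∧ γ < α) → α ∈ C)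

/-- `S` is stationary in `δ`: it meets every club of `δ`. -/
def StatIn (S : Set Ordinal) (δ : Ordinal) : Prop :=
  ∀ C, ClubIn C δ → (S ∩ C).Nonempty

/-- `S` is tenuous (nowhere stationary): for every ordinal `δ` of
uncountable cofinality, `S ∩ δ` is not stationary in `δ`. -/
def Tenuous (S : Set Ordinal) : Prop :=
  ∀ δ : Ordinal, Cardinal.aleph0 < δ.cof → ¬ StatIn (S ∩ Iio δ) δ

end RRF

namespace RRF

/-- A node: a padded sequence of ordinals, given by its length together with a
function which is `0` from the length onwards. -/
abbrev Node : Type 1 := Ordinal × (Ordinal → Ordinal)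

namespace Node

/-- The length of a node. -/
def lg (η : Node) : Ordinal := η.1

/-- Restriction of a node to length `β`. -/
noncomputable def restrict (η : Node) (β : Ordinal) : Node :=
  (min β η.1, fun ε => if ε < min β η.1 then η.2 ε else 0)

/-- `η ⊴ ν` : `η` is an initial segment of `ν`. -/
def Below (η ν : Node) : Prop := η.1 ≤ ν.1 ∧ ∀ ε < η.1, η.2 ε = ν.2 ε

/-- The empty sequence. -/
def emptyNode : Node := (0, fun _ => 0)

/-- `η⌢⟨j⟩` : the immediate successor of `η` with last value `j`. -/
noncomputable def ext (η : Node) (j : Ordinal) : Node :=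
  (η.1 + 1, fun ε => if ε < η.1 then η.2 ε else if ε = η.1 then j else 0)

end Node

/-- `η` is a genuine (padded) sequence with `η(ε) < θ ε` for `ε < lg η`. -/
def IsSeq (θ : Ordinal → Cardinal) (η : Node) : Prop :=
  (∀ ε < η.1, η.2 ε < (θ ε).ord) ∧ ∀ ε, ¬ ε < η.1 → η.2 ε = 0

/-- `T_{<δ}` : the full tree of sequences of length `< δ`. -/
def Ttree (θ : Ordinal → Cardinal) (δ : Ordinal) : Set Node :=
  {η | η.1 < δ ∧ IsSeq θ η}

/-- `T_ε` : the `ε`-th level of the full tree. -/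
def Level (θ : Ordinal → Cardinal) (ε : Ordinal) : Set Node :=
  {η | η.1 = ε ∧ IsSeq θ η}

/-- `lim_δ(u)` : length-`δ` sequences all of whose proper restrictions lie in `u`. -/
def limNodes (θ : Ordinal → Cardinal) (δ : Ordinal) (u : Set Node) : Set Node :=
  {ν | ν.1 = δ ∧ IsSeq θ ν ∧ ∀ β < δ, ν.restrict β ∈ u}

end RRF

namespace RRF

/-- `p^{[η]}` : the nodes of `p` comparable with `η` which extend `η` or are
initial segments of it. -/
def restrTree (p : Set Node) (η : Node) : Set Node :=
  {ρ ∈ p | Node.Below η ρ ∨ Node.Below ρ η}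

/-- `η` is the trunk of `p` : it is comparable with every node of `p` and is
`⊴`-maximal with this property. -/
def IsTrunk (p : Set Node) (η : Node) : Prop :=
  η ∈ p ∧ (∀ ν ∈ p, Node.Below ν η ∨ Node.Below η ν) ∧
    ∀ η' ∈ p, (∀ ν ∈ p, Node.Below ν η' ∨ Node.Below η' ν) → Node.Below η' η

/-- `p` is a tree: nonempty and closed under restrictions. -/
def IsTree (p : Set Node) : Prop :=
  p.Nonempty ∧ ∀ η ∈ p, ∀ β ≤ η.1, η.restrict β ∈ p

/-- `S_p` : the set of pruning levels of `p` below `δ` — limit levels `δ₁ < δ`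
at which some node has all proper restrictions in `p` but is itself not in `p`. -/
def pruneSet (θ : Ordinal → Cardinal) (δ : Ordinal) (p : Set Node) : Set Ordinal :=
  {δ₁ | δ₁ < δ ∧ Order.IsSuccLimit δ₁ ∧ ∃ η ∈ Level θ δ₁, η ∉ p ∧ ∀ β < δ₁, η.restrict β ∈ p}

/-- `p` is a condition of the forcing `Q⁰_δ`. -/
structure IsCond0 (θ : Ordinal → Cardinal) (Sstar : Set Ordinal) (δ : Ordinal)
    (p : Set Node) : Prop where
  subset : p ⊆ Ttree θ δ
  tree : IsTree p
  trunk : ∃ η, IsTrunk p η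
  levels : ∀ η ∈ p, ∀ β, η.1 ≤ β → β < δ → ∃ ν ∈ p, ν.1 = β ∧ Node.Below η ν
  branches : ∀ η ∈ p, ∃ ν ∈ limNodes θ δ p, Node.Below η ν
  fullSucc : ∀ t, IsTrunk p t → ∀ η ∈ p, Node.Below t η →
      ∀ j < ((θ η.1).ord), η.ext j ∈ p
  pruneSub : pruneSet θ δ p ⊆ Sstar
  pruneTen : Tenuous (pruneSet θ δ p)
  pruneGt : ∀ t, IsTrunk p t → ∀ δ₁ ∈ pruneSet θ δ p, t.1 < δ₁

/-- Compatibility in `Q⁰_δ` (order is reverse inclusion). -/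
def Compat0 (θ : Ordinal → Cardinal) (Sstar : Set Ordinal) (δ : Ordinal)
    (p q : Set Node) : Prop :=
  ∃ r, IsCond0 θ Sstar δ r ∧ r ⊆ p ∧ r ⊆ q

/-- Membership in `Ξ_δ` for a family `⟨q_η : η ∈ Λ⟩`. -/
structure IsXi (θ : Ordinal → Cardinal) (Sstar : Set Ordinal) (δ : Ordinal)
    (Λ : Set Node) (q : Node → Set Node) : Prop where
  sub : Λ ⊆ Ttree θ δ
  cond : ∀ η ∈ Λ, IsCond0 θ Sstar δ (q η)
  trunk : ∀ η ∈ Λ, IsTrunk (q η) η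
  anti : ∀ η ∈ Λ, ∀ ν ∈ Λ, η ≠ ν → η ∉ q ν ∨ ν ∉ q η
  union : IsCond0 θ Sstar δ (⋃ η ∈ Λ, q η)

/-- The coder of `⟨q_η : η ∈ Λ⟩`. -/
def coder (Λ : Set Node) (q : Node → Set Node) : Set (Node × Node) :=
  {x | x.1 ∈ Λ ∧ x.2 ∈ q x.1}

end RRF

namespace RRF

-- The recursively defined condition `p*_{η,δ,S}`, relative to abstract
-- "successful level" data `succl`, `rst` (= `r*_δ`), `Λst` (= `Λ*_δ`) and
-- `qst` (= `⟨q*_{δ,η'}⟩`).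
open Classical in
noncomputable def pstar (θ : Ordinal → Cardinal) (succl : Ordinal → Prop)
    (rst : Ordinal → Set Node) (Λst : Ordinal → Set Node)
    (qst : Ordinal → Node → Set Node) :
    Ordinal → Node → Set Ordinal → Set Node :=
  WellFounded.fix (wellFounded_lt)
    (fun δ rec η S =>
      if sSup S ≤ η.1 then
        -- case (a): `(T_{<δ})^{[η]}`
        restrTree (Ttree θ δ) η
      else if _hmem : sSup S ∈ S then
        if hlt : sSup S < δ then
          if succl (sSup S) then
            -- case (d): last element `δ₁ = sSup S` is successful
            {ν ∈ Ttree θ δ |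
              (ν.1 < sSup S ∧ ν ∈ rec (sSup S) hlt η (S ∩ Set.Iio (sSup S))) ∨
              (sSup S ≤ ν.1 ∧
                ν.restrict (sSup S) ∈
                  limNodes θ (sSup S) (rec (sSup S) hlt η (S ∩ Set.Iio (sSup S))) ∧
                (ν.restrict (sSup S) ∈ limNodes θ (sSup S) (rst (sSup S)) →
                  ∃ η' ∈ Λst (sSup S),
                    ν.restrict (sSup S) ∈ limNodes θ (sSup S) (qst (sSup S) η')))}
          else
            -- case (c): last element `δ₁ = sSup S` is not successful
            {ν ∈ Ttree θ δ |
              (ν.1 < sSup S ∧ ν ∈ rec (sSup S) hlt η (S ∩ Set.Iio (sSup S))) ∨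
              (sSup S ≤ ν.1 ∧
                ν.restrict (sSup S) ∈
                  limNodes θ (sSup S) (rec (sSup S) hlt η (S ∩ Set.Iio (sSup S))))}
        else ∅
      else
        -- case (b): `S` unbounded above `lg η` with no last element
        {ν ∈ Ttree θ δ |
          Node.Below ν η ∨
          (Node.Below η ν ∧
            ((∃ δ₁, ∃ h : δ₁ < δ, δ₁ ∈ S ∧ ν.1 < δ₁ ∧
                ν ∈ rec δ₁ h η (S ∩ Set.Iio δ₁)) ∨
             (sSup S ≤ ν.1 ∧ ∀ δ₁, ∀ h : δ₁ < δ, δ₁ ∈ S → η.1 < δ₁ →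
                ∀ ζ < δ₁, ν.restrict ζ ∈ rec δ₁ h η (S ∩ Set.Iio δ₁))))})

/-- Membership in the main forcing `Q_δ`. -/
def IsCondQ (θ : Ordinal → Cardinal) (succl : Ordinal → Prop)
    (rst Λst : Ordinal → Set Node) (qst : Ordinal → Node → Set Node)
    (Sstar : Set Ordinal) (δ : Ordinal) (p : Set Node) : Prop :=
  ∃ η ∈ Ttree θ δ, ∃ S, S ⊆ Sstar ∩ Set.Iio δ ∧ Tenuous S ∧
    p = pstar θ succl rst Λst qst δ η S

/-- Membership in the forcing `Q'_δ`. -/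
def IsCondQ' (θ : Ordinal → Cardinal) (succl : Ordinal → Prop)
    (rst Λst : Ordinal → Set Node) (qst : Ordinal → Node → Set Node)
    (Sstar : Set Ordinal) (δ : Ordinal) (p : Set Node) : Prop :=
  IsCond0 θ Sstar δ p ∧
  ∀ δ₁ ∈ Sstar, δ₁ < δ → (∀ t, IsTrunk p t → t.1 < δ₁) →
    IsCondQ θ succl rst Λst qst Sstar δ₁ (p ∩ Ttree θ δ₁)

end RRF

/-!
Outside `S` the recursion defining `p*_{η,δ,S}` only ever takes limits, so `p*_{η,δ,S}` is
closed under limits at every limit level `δ₁ ∉ S`. The proof is by induction on `δ`, driven by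
coherence: below any `δ₂ ∈ S`, `p*_{η,δ,S}` agrees with `p*_{η,δ₂,S ∩ δ₂}`. Hence if some
`δ₂ ∈ S` lies above `δ₁` we can pass to `δ₂`; otherwise `δ₁` lies above all of `S`, where
membership is decided by the restrictions to `sup S` and to the levels below it.
-/

namespace RRF

namespace Node

lemma restrict_fst_of_le {η : Node} {β : Ordinal} (h : β ≤ η.1) :
    (η.restrict β).1 = β :=
  min_eq_left h

lemma restrict_snd_of_lt {η : Node} {β ε : Ordinal} (h : ε < min β η.1) :
    (η.restrict β).2 ε = η.2 ε :=
  if_pos h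

lemma restrict_restrict (η : Node) {γ β : Ordinal} (h : γ ≤ β) :
    (η.restrict β).restrict γ = η.restrict γ := by
  have hmin : min γ (min β η.1) = min γ η.1 := by rw [← min_assoc, min_eq_left h]
  refine Prod.ext hmin (funext fun ε => ?_)
  simp only [restrict, hmin]
  split_ifs with h₁ h₂
  · rfl
  · exact absurd (lt_min (h₁.trans_le ((min_le_left _ _).trans h)) (lt_min_iff.mp h₁).2) h₂
  · rfl

lemma Below.trans {η ν ρ : Node} (h₁ : η.Below ν) (h₂ : ν.Below ρ) : η.Below ρ :=
  ⟨h₁.1.trans h₂.1, fun ε hε => (h₁.2 ε hε).trans (h₂.2 ε (hε.trans_le h₁.1))⟩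

lemma restrict_below (η : Node) (β : Ordinal) : (η.restrict β).Below η :=
  ⟨min_le_right _ _, fun _ hε => if_pos hε⟩

lemma below_of_comparable_restrict {η ν : Node} {β : Ordinal} (hηβ : η.1 ≤ β) (hβν : β ≤ ν.1)
    (h : (ν.restrict β).Below η ∨ η.Below (ν.restrict β)) : η.Below ν := by
  rcases h with h | h
  · refine ⟨hηβ.trans hβν, fun ε hε => ?_⟩
    have hε' : ε < min β ν.1 := by rw [min_eq_left hβν]; exact hε.trans_le hηβ
    rw [← restrict_snd_of_lt hε']
    exact (h.2 ε hε').symm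
  · exact h.trans (restrict_below ν β)

lemma below_of_forall_restrict_below {η ν : Node} (hlim : Order.IsSuccLimit ν.1)
    (hle : ν.1 ≤ η.1) (h : ∀ β < ν.1, (ν.restrict β).Below η) : ν.Below η := by
  refine ⟨hle, fun ε hε => ?_⟩
  have hε' : ε < min (Order.succ ε) ν.1 := lt_min (Order.lt_succ ε) hε
  rw [← restrict_snd_of_lt hε']
  exact (h _ (hlim.succ_lt hε)).2 ε hε'

lemma comparable_of_forall_restrict {η ν : Node} (hlim : Order.IsSuccLimit ν.1)
    (h : ∀ β < ν.1, (ν.restrict β).Below η ∨ η.Below (ν.restrict β)) :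
    ν.Below η ∨ η.Below ν := by
  rcases lt_or_ge η.1 ν.1 with hlt | hle
  · exact Or.inr (below_of_comparable_restrict le_rfl hlt.le (h _ hlt))
  · refine Or.inl (below_of_forall_restrict_below hlim hle fun β hβ => ?_)
    refine (h β hβ).resolve_right fun hb => ?_
    have hlen : η.1 ≤ β := hb.1.trans (min_le_left _ _)
    exact (hlen.trans_lt hβ).not_ge hle

end Node

lemma restrict_mem_Ttree {θ : Ordinal → Cardinal} {δ : Ordinal} {ν : Node}
    (hν : ν ∈ Ttree θ δ) (β : Ordinal) : ν.restrict β ∈ Ttree θ δ :=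
  ⟨(min_le_right _ _).trans_lt hν.1,
    fun ε hε => by
      rw [Node.restrict_snd_of_lt hε]
      exact hν.2.1 ε (hε.trans_le (min_le_right _ _)),
    fun _ hε => if_neg hε⟩

lemma Ttree_mono {θ : Ordinal → Cardinal} {δ δ' : Ordinal} (h : δ ≤ δ') :
    Ttree θ δ ⊆ Ttree θ δ' :=
  fun _ hν => ⟨hν.1.trans_le h, hν.2⟩

lemma tenuous_mono {S' S : Set Ordinal} (h : S' ⊆ S) (hS : Tenuous S) : Tenuous S' :=
  fun δ hδ hstat => hS δ hδ fun C hC =>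
    (hstat C hC).mono (inter_subset_inter_left _ (inter_subset_inter_left _ h))

lemma inter_Iio_inter_Iio_of_le {S : Set Ordinal} {a b : Ordinal} (h : b ≤ a) :
    S ∩ Iio a ∩ Iio b = S ∩ Iio b := by
  rw [inter_assoc, Iio_inter_Iio, min_eq_right h]

section Pstar

variable {θ : Ordinal → Cardinal} {succl : Ordinal → Prop} {rst Λst : Ordinal → Set Node}
  {qst : Ordinal → Node → Set Node} {δ : Ordinal} {η : Node} {S : Set Ordinal}

local notation "P" => pstar θ succl rst Λst qst

lemma pstar_of_sSup_le (h : sSup S ≤ η.1) : P δ η S = restrTree (Ttree θ δ) η := by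
  rw [pstar, WellFounded.fix_eq, if_pos h]

lemma pstar_of_sSup_mem (h₁ : η.1 < sSup S) (h₂ : sSup S ∈ S) (h₃ : sSup S < δ) :
    P δ η S =
      {ν ∈ Ttree θ δ |
        (ν.1 < sSup S ∧ ν ∈ P (sSup S) η (S ∩ Iio (sSup S))) ∨
        (sSup S ≤ ν.1 ∧
          ν.restrict (sSup S) ∈ limNodes θ (sSup S) (P (sSup S) η (S ∩ Iio (sSup S))) ∧
          (succl (sSup S) → ν.restrict (sSup S) ∈ limNodes θ (sSup S) (rst (sSup S)) →
            ∃ η' ∈ Λst (sSup S),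
              ν.restrict (sSup S) ∈ limNodes θ (sSup S) (qst (sSup S) η')))} := by
  rw [pstar, WellFounded.fix_eq, if_neg h₁.not_ge, dif_pos h₂, dif_pos h₃]
  split_ifs with h₄ <;> simp [h₄]

lemma pstar_of_sSup_notMem (h₁ : η.1 < sSup S) (h₂ : sSup S ∉ S) :
    P δ η S =
      {ν ∈ Ttree θ δ |
        ν.Below η ∨
        (η.Below ν ∧
          ((∃ δ₁, ∃ _ : δ₁ < δ, δ₁ ∈ S ∧ ν.1 < δ₁ ∧ ν ∈ P δ₁ η (S ∩ Iio δ₁)) ∨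
           (sSup S ≤ ν.1 ∧ ∀ δ₁, ∀ _ : δ₁ < δ, δ₁ ∈ S → η.1 < δ₁ →
              ∀ ζ < δ₁, ν.restrict ζ ∈ P δ₁ η (S ∩ Iio δ₁))))} := by
  rw [pstar, WellFounded.fix_eq, if_neg h₁.not_ge, dif_neg h₂]

lemma pstar_subset_Ttree (hS : S ⊆ Iio δ) : P δ η S ⊆ Ttree θ δ := by
  intro ν hν
  rcases le_or_gt (sSup S) η.1 with h₁ | h₁
  · rw [pstar_of_sSup_le h₁] at hν
    exact hν.1
  by_cases h₂ : sSup S ∈ S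
  · rw [pstar_of_sSup_mem h₁ h₂ (hS h₂)] at hν
    exact hν.1
  · rw [pstar_of_sSup_notMem h₁ h₂] at hν
    exact hν.1

lemma mem_pstar_iff_of_lt_sSup (hS : S ⊆ Iio δ) (h₁ : η.1 < sSup S) (h₂ : sSup S ∈ S)
    {ν : Node} (hν : ν.1 < sSup S) :
    ν ∈ P δ η S ↔ ν ∈ P (sSup S) η (S ∩ Iio (sSup S)) := by
  rw [pstar_of_sSup_mem h₁ h₂ (hS h₂)]
  constructor
  · rintro ⟨-, ⟨-, h⟩ | ⟨hle, -⟩⟩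
    · exact h
    · exact absurd hν hle.not_gt
  · intro h
    exact ⟨Ttree_mono (hS h₂).le (pstar_subset_Ttree inter_subset_right h), Or.inl ⟨hν, h⟩⟩

lemma mem_pstar_congr_of_sSup_le (hS : S ⊆ Iio δ) (h₁ : η.1 < sSup S) (h₂ : sSup S ∈ S)
    {ν ν' : Node} (hν : ν ∈ Ttree θ δ) (hν' : ν' ∈ Ttree θ δ) (hσν : sSup S ≤ ν.1)
    (hσν' : sSup S ≤ ν'.1) (heq : ν.restrict (sSup S) = ν'.restrict (sSup S)) :
    ν ∈ P δ η S ↔ ν' ∈ P δ η S := by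
  rw [pstar_of_sSup_mem h₁ h₂ (hS h₂)]
  simp only [mem_sep_iff, hν, hν', hσν, hσν', hσν.not_gt, hσν'.not_gt, heq, true_and,
    false_and, false_or]

lemma mem_pstar_of_below (hS : S ⊆ Iio δ) {ν : Node} (hν : ν ∈ Ttree θ δ) (hb : ν.Below η) :
    ν ∈ P δ η S := by
  induction δ using WellFoundedLT.induction generalizing S ν with
  | ind δ IH =>
    rcases le_or_gt (sSup S) η.1 with h₁ | h₁
    · rw [pstar_of_sSup_le h₁]
      exact ⟨hν, Or.inr hb⟩
    by_cases h₂ : sSup S ∈ S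
    · have hνσ : ν.1 < sSup S := hb.1.trans_lt h₁
      rw [mem_pstar_iff_of_lt_sSup hS h₁ h₂ hνσ]
      exact IH _ (hS h₂) inter_subset_right ⟨hνσ, hν.2⟩ hb
    · rw [pstar_of_sSup_notMem h₁ h₂]
      exact ⟨hν, Or.inl hb⟩

lemma pstar_comparable (hS : S ⊆ Iio δ) {ν : Node} (hν : ν ∈ P δ η S) :
    ν.Below η ∨ η.Below ν := by
  induction δ using WellFoundedLT.induction generalizing S ν with
  | ind δ IH =>
    rcases le_or_gt (sSup S) η.1 with h₁ | h₁
    · rw [pstar_of_sSup_le h₁] at hν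
      exact hν.2.symm
    by_cases h₂ : sSup S ∈ S
    · by_cases hνσ : ν.1 < sSup S
      · exact IH _ (hS h₂) inter_subset_right ((mem_pstar_iff_of_lt_sSup hS h₁ h₂ hνσ).mp hν)
      rw [pstar_of_sSup_mem h₁ h₂ (hS h₂)] at hν
      obtain ⟨-, ⟨hlt, -⟩ | ⟨hσν, hlim, -⟩⟩ := hν
      · exact absurd hlt hνσ
      have hmem := hlim.2.2 η.1 h₁
      rw [Node.restrict_restrict ν h₁.le] at hmem
      exact Or.inr (Node.below_of_comparable_restrict le_rfl (h₁.le.trans hσν)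
        (IH _ (hS h₂) inter_subset_right hmem))
    · rw [pstar_of_sSup_notMem h₁ h₂] at hν
      exact hν.2.imp_right And.left

lemma mem_pstar_iff_of_lt_mem (hS : S ⊆ Iio δ) {δ₂ : Ordinal} (hδ₂ : δ₂ ∈ S) {ν : Node}
    (hν : ν.1 < δ₂) : ν ∈ P δ η S ↔ ν ∈ P δ₂ η (S ∩ Iio δ₂) := by
  induction δ using WellFoundedLT.induction generalizing S δ₂ ν with
  | ind δ IH =>
    have hδ₂σ : δ₂ ≤ sSup S := le_csSup (bddAbove_Iio.mono hS) hδ₂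
    have transfer : ∀ {a b : Ordinal}, a ∈ S → b ∈ S → a ≤ b → ν.1 < a →
        (ν ∈ P b η (S ∩ Iio b) ↔ ν ∈ P a η (S ∩ Iio a)) := by
      intro a b ha hb hab hνa
      rcases hab.eq_or_lt with rfl | hab
      · rfl
      rw [IH b (hS hb) inter_subset_right ⟨ha, hab⟩ hνa, inter_Iio_inter_Iio_of_le hab.le]
    rcases le_or_gt (sSup S) η.1 with h₁ | h₁
    · have h₁' : sSup (S ∩ Iio δ₂) ≤ η.1 :=
        (csSup_le_csSup' (bddAbove_Iio.mono hS) inter_subset_left).trans h₁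
      rw [pstar_of_sSup_le h₁, pstar_of_sSup_le h₁']
      exact and_congr_left fun _ => ⟨fun h => ⟨hν, h.2⟩, fun h => ⟨hν.trans (hS hδ₂), h.2⟩⟩
    by_cases h₂ : sSup S ∈ S
    · rw [mem_pstar_iff_of_lt_sSup hS h₁ h₂ (hν.trans_le hδ₂σ)]
      exact transfer hδ₂ h₂ hδ₂σ hν
    rw [pstar_of_sSup_notMem h₁ h₂]
    constructor
    · rintro ⟨hT, hb | ⟨-, ⟨δ₃, -, hδ₃, hνδ₃, hm⟩ | ⟨hσν, -⟩⟩⟩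
      · exact mem_pstar_of_below inter_subset_right ⟨hν, hT.2⟩ hb
      · rcases le_total δ₂ δ₃ with h | h
        · exact (transfer hδ₂ hδ₃ h hν).mp hm
        · exact (transfer hδ₃ hδ₂ h hνδ₃).mpr hm
      · exact absurd (hσν.trans_lt hν) hδ₂σ.not_gt
    · intro hm
      have hT := Ttree_mono (hS hδ₂).le (pstar_subset_Ttree inter_subset_right hm)
      rcases pstar_comparable inter_subset_right hm with hb | hb
      · exact ⟨hT, Or.inl hb⟩
      · exact ⟨hT, Or.inr ⟨hb, Or.inl ⟨δ₂, hS hδ₂, hδ₂, hν, hm⟩⟩⟩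

lemma mem_pstar_of_forall_restrict_mem (hS : S ⊆ Iio δ) {δ₁ : Ordinal} (hδ₁ : δ₁ < δ)
    (hlim : Order.IsSuccLimit δ₁) (hδ₁S : δ₁ ∉ S) {ν : Node} (hν : ν ∈ Level θ δ₁)
    (hres : ∀ β < δ₁, ν.restrict β ∈ P δ η S) : ν ∈ P δ η S := by
  induction δ using WellFoundedLT.induction generalizing S with
  | ind δ IH =>
    obtain ⟨rfl, hseq⟩ := hν
    have hT : ν ∈ Ttree θ δ := ⟨hδ₁, hseq⟩
    have hlen : ∀ β ≤ ν.1, (ν.restrict β).1 = β := fun β hβ => Node.restrict_fst_of_le hβ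
    by_cases hgt : ∃ δ₂ ∈ S, ν.1 < δ₂
    · obtain ⟨δ₂, hδ₂, hνδ₂⟩ := hgt
      rw [mem_pstar_iff_of_lt_mem hS hδ₂ hνδ₂]
      refine IH δ₂ (hS hδ₂) inter_subset_right hνδ₂ (fun h => hδ₁S h.1) fun β hβ => ?_
      rw [← mem_pstar_iff_of_lt_mem hS hδ₂ ((hlen β hβ.le).trans_lt (hβ.trans hνδ₂))]
      exact hres β hβ
    push Not at hgt
    have hSν : ∀ δ₂ ∈ S, δ₂ < ν.1 :=
      fun δ₂ h => (hgt δ₂ h).lt_of_ne fun heq => hδ₁S (heq ▸ h)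
    have hcomp : ν.Below η ∨ η.Below ν :=
      Node.comparable_of_forall_restrict hlim fun β hβ => pstar_comparable hS (hres β hβ)
    rcases le_or_gt (sSup S) η.1 with h₁ | h₁
    · rw [pstar_of_sSup_le h₁]
      exact ⟨hT, hcomp.symm⟩
    by_cases h₂ : sSup S ∈ S
    · -- `ν ↾ succ (sSup S)` already has the same restriction to the last level `sSup S`
      have hsucc : Order.succ (sSup S) < ν.1 := hlim.succ_lt (hSν _ h₂)
      refine (mem_pstar_congr_of_sSup_le hS h₁ h₂ hT (restrict_mem_Ttree hT _)
        (hgt _ h₂) ?_ ?_).mpr (hres _ hsucc)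
      · rw [hlen _ hsucc.le]
        exact Order.le_succ _
      · rw [Node.restrict_restrict ν (Order.le_succ _)]
    · rw [pstar_of_sSup_notMem h₁ h₂]
      refine ⟨hT, hcomp.imp_right fun hb => ⟨hb, Or.inr ⟨csSup_le' hgt, ?_⟩⟩⟩
      intro δ₂ _ hδ₂ _ ζ hζ
      have hζν : ζ < ν.1 := hζ.trans (hSν δ₂ hδ₂)
      rw [← mem_pstar_iff_of_lt_mem hS hδ₂ ((hlen ζ hζν.le).trans_lt hζ)]
      exact hres ζ hζν

lemma pruneSet_pstar_subset (hS : S ⊆ Iio δ) : pruneSet θ δ (P δ η S) ⊆ S := by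
  rintro δ₁ ⟨hδ₁, hlim, ν, hν, hνp, hres⟩
  by_contra hδ₁S
  exact hνp (mem_pstar_of_forall_restrict_mem hS hδ₁ hlim hδ₁S hν hres)

end Pstar

theorem stmt14_general
    (θ : Ordinal → Cardinal)
    (Sstar : Set Ordinal)
    (succl : Ordinal → Prop) (rst Λst : Ordinal → Set Node)
    (qst : Ordinal → Node → Set Node)
    (δ : Ordinal)
    (η : Node)
    (S : Set Ordinal) (hS : S ⊆ Sstar ∩ Set.Iio δ) (hten : Tenuous S) :
    pruneSet θ δ (pstar θ succl rst Λst qst δ η S) ⊆ S ∧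
      Tenuous (pruneSet θ δ (pstar θ succl rst Λst qst δ η S)) := by
  have hsub : pruneSet θ δ (pstar θ succl rst Λst qst δ η S) ⊆ S :=
    pruneSet_pstar_subset fun _ h => (hS h).2
  exact ⟨hsub, tenuous_mono hsub hten⟩

/-- for `p = p*_{η,δ,S} ∈ Q_δ`, the set of pruning levels
`S_p` is contained in `S`; in particular it is tenuous. -/
theorem stmt14 (lamc : Cardinal) (hinacc : lamc.IsInaccessible)
    (θ : Ordinal → Cardinal) (hθ : ∀ ε, 2 ≤ θ ε)
    (hθlt : ∀ ε < lamc.ord, (θ ε).ord < lamc.ord)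
    (Sstar : Set Ordinal) (hSsub : Sstar ⊆ Set.Iio lamc.ord)
    (hSstat : StatIn Sstar lamc.ord)
    (hSsl : ∀ δ ∈ Sstar, (Ordinal.card δ).IsStrongLimit ∧ (Ordinal.card δ).ord = δ)
    (hSθ : ∀ δ ∈ Sstar, ∀ ζ < δ, (θ ζ).ord < δ)
    (hrefl : ∀ ε < lamc.ord, StatIn (Sstar ∩ Set.Iio ε) ε →
      (Ordinal.card ε).IsInaccessible)
    (succl : Ordinal → Prop) (rst Λst : Ordinal → Set Node)
    (qst : Ordinal → Node → Set Node)
    (hsucc : ∀ δ₁, succl δ₁ → IsXi θ Sstar δ₁ (Λst δ₁) (qst δ₁) ∧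
      rst δ₁ = ⋃ η ∈ Λst δ₁, qst δ₁ η)
    (δ : Ordinal) (hδ : δ ∈ Sstar ∨ δ = lamc.ord)
    (η : Node) (hη : η ∈ Ttree θ δ)
    (S : Set Ordinal) (hS : S ⊆ Sstar ∩ Set.Iio δ) (hten : Tenuous S) :
    pruneSet θ δ (pstar θ succl rst Λst qst δ η S) ⊆ S ∧
      Tenuous (pruneSet θ δ (pstar θ succl rst Λst qst δ η S)) :=
  stmt14_general θ Sstar succl rst Λst qst δ η S hS hten

end RRF
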